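/- For every x ∈ [0, π_{4/3,4}/4), one has sin_{4/3,4}(2x) = √2·sl(√2·x) / √(1 + sl(√2·x)^4), where sl is the lemniscate sine; moreover π_{4/3,4}/4 = ϖ/(2√2), where ϖ is the lemniscate constant. -/

import Mathlib

open Real Set MeasureTheory Filter

/-- `sin_{p,q}^{-1}(x) = ∫₀ˣ (1-t^q)^{-1/p} dt`. -/
noncomputable def arcsinpq (p q x : ℝ) : ℝ := ∫ t in (0:ℝ)..x, (1 - t ^ q) ^ (-(1 / p))

/-- The generalized π: `π_{p,q} = 2 sin_{p,q}^{-1}(1)`. -/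
noncomputable def pipq (p q : ℝ) : ℝ := 2 * arcsinpq p q 1

/-- `sin_{p,q}` on `[0, π_{p,q}/2]`, as the inverse of `arcsinpq p q : [0,1] → [0, π_{p,q}/2]`. -/
noncomputable def sinHalf (p q : ℝ) : ℝ → ℝ := Function.invFunOn (arcsinpq p q) (Set.Icc 0 1)

/-- `sin_{p,q}` on all of `ℝ`: extended to `[π_{p,q}/2, π_{p,q}]` by `sin_{p,q}(π_{p,q}-x)` and
then to `ℝ` as the odd `2π_{p,q}`-periodic continuation. -/
noncomputable def sinpq (p q x : ℝ) : ℝ :=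
  let T := pipq p q
  let y := x - 2 * T * (⌊(x + T) / (2 * T)⌋ : ℝ)
  if y < 0 then -(sinHalf p q (if -y ≤ T / 2 then -y else T + y))
  else sinHalf p q (if y ≤ T / 2 then y else T - y)

/-- `cos_{p,q} = (sin_{p,q})'`. -/
noncomputable def cospq (p q : ℝ) : ℝ → ℝ := deriv (sinpq p q)

/-- Rising factorial (Pochhammer symbol) `(a)_n = a(a+1)⋯(a+n-1)`. -/
noncomputable def poch (a : ℝ) (n : ℕ) : ℝ := ∏ i ∈ Finset.range n, (a + i)

/-! The substitution `s = √2 t / √(1 + t⁴)` maps `[0, 1]` monotonically onto itself and turns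
`(1 - s⁴)^(-3/4) ds` into `√2 (1 - t⁴)^(-1/2) dt`. Hence
`sin_{4/3,4}⁻¹ (√2 t / √(1 + t⁴)) = √2 sl⁻¹ t` for `t ∈ [0, 1]`. At `t = 1` this is
`π_{4/3,4} = √2 ϖ`, and putting `t = sl (√2 x)` and applying `sin_{4/3,4}` gives the formula
for `sin_{4/3,4} (2x)`. -/

lemma intervalIntegrable_one_sub_rpow_rpow_neg {a q : ℝ} (ha₀ : 0 ≤ a) (ha₁ : a < 1)
    (hq : 1 ≤ q) : IntervalIntegrable (fun t : ℝ => (1 - t ^ q) ^ (-a)) volume 0 1 := by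
  have hdom : IntervalIntegrable (fun t : ℝ => (1 - t) ^ (-a)) volume 0 1 := by
    have hpow : IntervalIntegrable (fun t : ℝ => t ^ (-a)) volume 0 1 :=
      intervalIntegral.intervalIntegrable_rpow' (by linarith)
    simpa using (hpow.comp_sub_left 1).symm
  refine hdom.mono_fun (Measurable.aestronglyMeasurable (by fun_prop)) ?_
  rw [uIoc_of_le zero_le_one]
  refine (ae_restrict_iff' measurableSet_Ioc).2 (Eventually.of_forall fun t ht => ?_)
  rcases ht.2.eq_or_lt with rfl | ht₁
  · simp
  · have hle : t ^ q ≤ t := by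
      simpa using rpow_le_rpow_of_exponent_ge ht.1 ht.2 hq
    have hlt : t ^ q < 1 := rpow_lt_one ht.1.le ht₁ (by linarith)
    simp only [norm_of_nonneg (rpow_nonneg (sub_nonneg.2 hlt.le) _),
      norm_of_nonneg (rpow_nonneg (sub_nonneg.2 ht.2) _)]
    exact rpow_le_rpow_of_nonpos (by linarith) (by linarith) (by linarith)

section GeneralizedSine

variable {p q : ℝ}

lemma intervalIntegrable_arcsinpq_integrand (hp : 1 < p) (hq : 1 ≤ q) :
    IntervalIntegrable (fun t : ℝ => (1 - t ^ q) ^ (-(1 / p))) volume 0 1 :=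
  intervalIntegrable_one_sub_rpow_rpow_neg (by positivity) ((div_lt_one (by linarith)).2 hp) hq

lemma continuousOn_arcsinpq (hp : 1 < p) (hq : 1 ≤ q) :
    ContinuousOn (arcsinpq p q) (Icc 0 1) := by
  have := intervalIntegral.continuousOn_primitive_interval'
    (intervalIntegrable_arcsinpq_integrand hp hq) left_mem_uIcc
  rwa [uIcc_of_le zero_le_one] at this

lemma strictMonoOn_arcsinpq (hp : 1 < p) (hq : 1 ≤ q) :
    StrictMonoOn (arcsinpq p q) (Icc 0 1) := by
  intro a ha b hb hab
  have hint : ∀ {c d : ℝ}, c ∈ Icc (0 : ℝ) 1 → d ∈ Icc (0 : ℝ) 1 →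
      IntervalIntegrable (fun t : ℝ => (1 - t ^ q) ^ (-(1 / p))) volume c d := fun hc hd =>
    (intervalIntegrable_arcsinpq_integrand hp hq).mono_set <| by
      rw [← uIcc_of_le zero_le_one] at hc hd
      exact uIcc_subset_uIcc hc hd
  have h₀ : (0 : ℝ) ∈ Icc (0 : ℝ) 1 := left_mem_Icc.2 zero_le_one
  have hpos : 0 < ∫ t in a..b, (1 - t ^ q) ^ (-(1 / p)) :=
    intervalIntegral.intervalIntegral_pos_of_pos_on (hint ha hb) (fun t ht => rpow_pos_of_pos
      (sub_pos.2 (rpow_lt_one (ha.1.trans ht.1.le) (ht.2.trans_le hb.2) (by linarith))) _) hab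
  rw [← intervalIntegral.integral_interval_sub_left (hint h₀ hb) (hint h₀ ha)] at hpos
  exact sub_pos.1 hpos

lemma arcsinpq_zero : arcsinpq p q 0 = 0 := intervalIntegral.integral_same

lemma pipq_pos (hp : 1 < p) (hq : 1 ≤ q) : 0 < pipq p q := by
  have := strictMonoOn_arcsinpq hp hq (left_mem_Icc.2 zero_le_one) (right_mem_Icc.2 zero_le_one)
    one_pos
  rw [arcsinpq_zero] at this
  unfold pipq
  positivity

lemma exists_arcsinpq_eq (hp : 1 < p) (hq : 1 ≤ q) {x : ℝ} (hx : x ∈ Icc 0 (pipq p q / 2)) :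
    ∃ u ∈ Icc 0 1, arcsinpq p q u = x := by
  have hx' : x ∈ Icc (arcsinpq p q 0) (arcsinpq p q 1) := by
    simpa [arcsinpq_zero, pipq] using hx
  exact intermediate_value_Icc zero_le_one (continuousOn_arcsinpq hp hq) hx'

lemma sinpq_eq_sinHalf (hT : 0 < pipq p q) {x : ℝ} (hx : x ∈ Icc 0 (pipq p q / 2)) :
    sinpq p q x = sinHalf p q x := by
  have hfloor : ⌊(x + pipq p q) / (2 * pipq p q)⌋ = 0 := by
    rw [Int.floor_eq_zero_iff, mem_Ico, div_lt_one (by positivity)]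
    exact ⟨div_nonneg (add_nonneg hx.1 hT.le) (by positivity), by linarith [hx.2]⟩
  simp [sinpq, hfloor, not_lt.2 hx.1, hx.2]

lemma sinpq_arcsinpq (hp : 1 < p) (hq : 1 ≤ q) {u : ℝ} (hu : u ∈ Icc 0 1) :
    sinpq p q (arcsinpq p q u) = u := by
  have hmono := (strictMonoOn_arcsinpq hp hq).monotoneOn
  have hmem : arcsinpq p q u ∈ Icc 0 (pipq p q / 2) := by
    refine ⟨?_, ?_⟩
    · simpa [arcsinpq_zero] using hmono (left_mem_Icc.2 zero_le_one) hu hu.1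
    · simpa [pipq] using hmono hu (right_mem_Icc.2 zero_le_one) hu.2
  rw [sinpq_eq_sinHalf (pipq_pos hp hq) hmem]
  exact (strictMonoOn_arcsinpq hp hq).injOn.leftInvOn_invFunOn hu

end GeneralizedSine

noncomputable def lemniscateSubst (t : ℝ) : ℝ := √2 * t / √(1 + t ^ 4)

lemma continuous_lemniscateSubst : Continuous lemniscateSubst :=
  Continuous.div (by fun_prop) (by fun_prop) fun t => by positivity

lemma hasDerivAt_lemniscateSubst (t : ℝ) :
    HasDerivAt lemniscateSubst (√2 * (1 - t ^ 4) / ((1 + t ^ 4) * √(1 + t ^ 4))) t := by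
  have hpos : 0 < 1 + t ^ 4 := by positivity
  have hden : HasDerivAt (fun s : ℝ => √(1 + s ^ 4)) (4 * t ^ 3 / (2 * √(1 + t ^ 4))) t := by
    simpa [div_eq_inv_mul] using
      (((hasDerivAt_pow 4 t).const_add 1).sqrt hpos.ne')
  have hquot : HasDerivAt lemniscateSubst
      ((√2 * 1 * √(1 + t ^ 4) - √2 * t * (4 * t ^ 3 / (2 * √(1 + t ^ 4)))) /
        √(1 + t ^ 4) ^ 2) t :=
    ((hasDerivAt_id t).const_mul √2).div hden (sqrt_pos.2 hpos).ne'
  refine hquot.congr_deriv ?_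
  have hsq : √(1 + t ^ 4) ^ 2 = 1 + t ^ 4 := sq_sqrt hpos.le
  field_simp
  linear_combination (4 * t ^ 4) * hsq

lemma lemniscateSubst_zero : lemniscateSubst 0 = 0 := by simp [lemniscateSubst]

lemma lemniscateSubst_one : lemniscateSubst 1 = 1 := by
  norm_num [lemniscateSubst]

lemma lemniscateSubst_nonneg {t : ℝ} (ht : 0 ≤ t) : 0 ≤ lemniscateSubst t := by
  unfold lemniscateSubst; positivity

lemma lemniscateSubst_le_one (t : ℝ) : lemniscateSubst t ≤ 1 := by
  rw [lemniscateSubst, div_le_one (by positivity)]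
  refine (le_abs_self _).trans (abs_le_sqrt ?_)
  rw [mul_pow, sq_sqrt zero_le_two]
  nlinarith [sq_nonneg (1 - t ^ 2)]

lemma one_sub_lemniscateSubst_pow_four (t : ℝ) :
    1 - lemniscateSubst t ^ 4 = ((1 - t ^ 4) / (1 + t ^ 4)) ^ 2 := by
  have hpos : 0 < 1 + t ^ 4 := by positivity
  have h2 : √2 ^ 4 = 4 := by
    rw [show √2 ^ 4 = (√2 ^ 2) ^ 2 by ring, sq_sqrt zero_le_two]; norm_num
  have hs : √(1 + t ^ 4) ^ 4 = (1 + t ^ 4) ^ 2 := by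
    rw [show √(1 + t ^ 4) ^ 4 = (√(1 + t ^ 4) ^ 2) ^ 2 by ring, sq_sqrt hpos.le]
  rw [lemniscateSubst, div_pow, mul_pow, h2, hs]
  field_simp
  ring

-- At `t⁴ = 1` both sides are `0`, since `0 ^ r = 0` for `r ≠ 0`.
lemma lemniscateSubst_deriv_mul_rpow {t : ℝ} (ht : t ^ 4 ≤ 1) :
    √2 * (1 - t ^ 4) / ((1 + t ^ 4) * √(1 + t ^ 4)) *
        (1 - lemniscateSubst t ^ 4) ^ (-(3 / 4) : ℝ)
      = √2 * (1 - t ^ 4) ^ (-(1 / 2) : ℝ) := by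
  have hpos : 0 < 1 + t ^ 4 := by positivity
  have hnn : 0 ≤ 1 - t ^ 4 := sub_nonneg.2 ht
  have hsqrt : (1 + t ^ 4) * √(1 + t ^ 4) = (1 + t ^ 4) ^ (3 / 2 : ℝ) := by
    rw [sqrt_eq_rpow, ← rpow_one_add' hpos.le (by norm_num)]; norm_num
  have hpow : (1 - lemniscateSubst t ^ 4) ^ (-(3 / 4) : ℝ)
      = (1 - t ^ 4) ^ (-(3 / 2) : ℝ) * (1 + t ^ 4) ^ (3 / 2 : ℝ) := by
    rw [one_sub_lemniscateSubst_pow_four, ← rpow_natCast, ← rpow_mul (by positivity),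
      div_rpow hnn hpos.le, div_eq_mul_inv, ← rpow_neg hpos.le]
    norm_num
  have hsplit : (1 - t ^ 4) ^ (-(1 / 2) : ℝ) = (1 - t ^ 4) * (1 - t ^ 4) ^ (-(3 / 2) : ℝ) := by
    rw [← rpow_one_add' hnn (by norm_num)]; norm_num
  rw [hsqrt, hpow, hsplit]
  have hA : (1 + t ^ 4) ^ (3 / 2 : ℝ) ≠ 0 := by positivity
  field_simp

lemma arcsinpq_lemniscateSubst {u : ℝ} (hu : u ∈ Icc (0 : ℝ) 1) :
    arcsinpq (4 / 3) 4 (lemniscateSubst u) = √2 * arcsinpq 2 4 u := by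
  have hIoo : ∀ t ∈ Ioo (min 0 u) (max 0 u), t ^ 4 ≤ 1 := fun t ht => by
    rw [min_eq_left hu.1, max_eq_right hu.1] at ht
    exact pow_le_one₀ ht.1.le (ht.2.le.trans hu.2)
  have hsubst := intervalIntegral.integral_deriv_smul_comp_of_deriv_nonneg
    (g := fun s : ℝ => (1 - s ^ 4) ^ (-(3 / 4) : ℝ)) continuous_lemniscateSubst.continuousOn
    (fun t _ => hasDerivAt_lemniscateSubst t)
    (fun t ht => div_nonneg (mul_nonneg (sqrt_nonneg 2) (sub_nonneg.2 (hIoo t ht)))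
      (by positivity))
  rw [lemniscateSubst_zero] at hsubst
  have hrpow : ∀ x : ℝ, x ^ (4 : ℝ) = x ^ 4 := fun x => rpow_ofNat x 4
  simp only [arcsinpq, hrpow]
  rw [show -(1 / (4 / 3 : ℝ)) = -(3 / 4) by norm_num, ← hsubst,
    ← intervalIntegral.integral_const_mul]
  refine intervalIntegral.integral_congr fun t ht => ?_
  rw [uIcc_of_le hu.1] at ht
  exact lemniscateSubst_deriv_mul_rpow (pow_le_one₀ ht.1 (ht.2.trans hu.2))

/-- For `x ∈ [0, π_{4/3,4}/4)`,
`sin_{4/3,4}(2x) = √2·sl(√2 x)/√(1+sl(√2 x)^4)` where `sl = sin_{2,4}` is the lemniscate sine;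
moreover `π_{4/3,4}/4 = ϖ/(2√2)` where `ϖ = π_{2,4}` is the lemniscate constant. -/
theorem EGL_via_lemniscate :
    (∀ x ∈ Set.Ico (0:ℝ) (pipq (4/3) 4 / 4),
      sinpq (4/3) 4 (2*x)
        = Real.sqrt 2 * sinpq 2 4 (Real.sqrt 2 * x) /
          Real.sqrt (1 + sinpq 2 4 (Real.sqrt 2 * x) ^ (4:ℕ))) ∧
    pipq (4/3) 4 / 4 = pipq 2 4 / (2 * Real.sqrt 2) := by
  have hπ : pipq (4 / 3) 4 = √2 * pipq 2 4 := by
    simp only [pipq]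
    rw [← lemniscateSubst_one, arcsinpq_lemniscateSubst (right_mem_Icc.2 zero_le_one),
      lemniscateSubst_one]
    ring
  have hsqrt : √2 * √2 = 2 := mul_self_sqrt zero_le_two
  refine ⟨fun x hx => ?_, by rw [hπ]; field_simp; rw [sq_sqrt zero_le_two]; ring⟩
  have hsx : √2 * x ∈ Icc 0 (pipq 2 4 / 2) := by
    refine ⟨mul_nonneg (sqrt_nonneg 2) hx.1, ?_⟩
    calc √2 * x ≤ √2 * (pipq (4 / 3) 4 / 4) :=
          mul_le_mul_of_nonneg_left hx.2.le (sqrt_nonneg 2)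
      _ = pipq 2 4 / 2 := by rw [hπ]; linear_combination (pipq 2 4 / 4) * hsqrt
  obtain ⟨u, hu, hux⟩ := exists_arcsinpq_eq (by norm_num) (by norm_num) hsx
  have h2x : 2 * x = arcsinpq (4 / 3) 4 (lemniscateSubst u) := by
    rw [arcsinpq_lemniscateSubst hu, hux, ← mul_assoc, hsqrt]
  rw [h2x, ← hux, sinpq_arcsinpq (by norm_num) (by norm_num) hu,
    sinpq_arcsinpq (by norm_num) (by norm_num)
      ⟨lemniscateSubst_nonneg hu.1, lemniscateSubst_le_one u⟩]
  rfl
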